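/- Let a, b ∈ SL(2,ℂ), A = a·m·a⁻¹, B = b·m·b⁻¹, and suppose AB ≠ BA. Then [ã,b̃]·[b̃,ã] = (tr(AB) − 2)·I, where I is the 2×2 identity matrix. -/
import Mathlib


abbrev Mat := Matrix (Fin 2) (Fin 2) ℂ

/-- The symplectic form `⟨x,y⟩ = x₁y₂ − x₂y₁` of two column vectors. -/
def symp (x y : Fin 2 → ℂ) : ℂ := x 0 * y 1 - x 1 * y 0

/-- First column `a₁` of a 2×2 matrix. -/
def col1 (a : Mat) : Fin 2 → ℂ := fun i => a i 0

/-- Third column `a₃ = a₁ − z·a₂`. -/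
def col3 (z : ℂ) (a : Mat) : Fin 2 → ℂ := fun i => a i 0 - z * a i 1

/-- The quandle matrix `[ã,b̃] = diag(⟨a₁,b₃⟩, ⟨a₃,b₁⟩)`. -/
def brak (z : ℂ) (a b : Mat) : Mat :=
  !![symp (col1 a) (col3 z b), 0; 0, symp (col3 z a) (col1 b)]

lemma inv_of_det_one (a : Mat) (ha : a.det = 1) :
    a⁻¹ = !![a 1 1, -a 0 1; -a 1 0, a 0 0] := by
  rw [Matrix.inv_def, ha, Matrix.adjugate_fin_two]
  simp

/-- Let `a, b ∈ SL(2,ℂ)`, `A = a·m·a⁻¹`, `B = b·m·b⁻¹`,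
and suppose `AB ≠ BA`.  Then `[ã,b̃]·[b̃,ã] = (tr(AB) − 2)·I`. -/
theorem brak_mul_brak (M : ℂ) (hM0 : M ≠ 0) (hM1 : M ≠ 1) (hMneg1 : M ≠ -1)
    (a b : Mat) (ha : a.det = 1) (hb : b.det = 1)
    (A B : Mat) (hA : A = a * !![M, 1; 0, M⁻¹] * a⁻¹)
    (hB : B = b * !![M, 1; 0, M⁻¹] * b⁻¹)
    (hAB : A * B ≠ B * A) :
    brak (M - M⁻¹) a b * brak (M - M⁻¹) b a = ((A * B).trace - 2) • (1 : Mat) := by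
  have hM : M * M⁻¹ = 1 := mul_inv_cancel₀ hM0
  rw [Matrix.det_fin_two] at ha hb
  subst hA hB
  rw [inv_of_det_one a (by rw [Matrix.det_fin_two]; exact ha),
      inv_of_det_one b (by rw [Matrix.det_fin_two]; exact hb)]
  ext i j
  fin_cases i <;> fin_cases j <;>
    simp only [brak, symp, col1, col3, Matrix.mul_apply, Matrix.trace_fin_two,
      Matrix.smul_apply, Matrix.one_apply, Fin.sum_univ_two, Matrix.cons_val',
      Matrix.cons_val_zero, Matrix.cons_val_one, Matrix.head_cons, Matrix.of_apply, Matrix.vecHead, Matrix.vecTail, Function.comp,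
      Matrix.empty_val', Matrix.cons_val_fin_one, smul_eq_mul, Fin.isValue,
      Fin.zero_eta, Fin.mk_one, one_ne_zero, zero_ne_one, mul_one, mul_zero,
      ite_true, ite_false, reduceIte]
  · linear_combination (2 * b 0 1 * b 1 0 * M * M⁻¹ - 2 * b 0 0 * b 1 1 * M * M⁻¹) * ha
      + (-2 * M * M⁻¹) * hb + (-2 : ℂ) * hM
  · ring
  · ring
  · linear_combination (2 * b 0 1 * b 1 0 * M * M⁻¹ - 2 * b 0 0 * b 1 1 * M * M⁻¹) * ha
      + (-2 * M * M⁻¹) * hb + (-2 : ℂ) * hM
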